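/- Let F: ℝ^d → ℝ be differentiable and let h_{k+1} be a minimizer of G(z) = (1/s)‖z - h_k‖² - (1/(4s))‖z - h_{k-1}‖² + F(z). Then F(h_{k+1}) + (1/(4s))‖h_{k+1} - h_k‖² ≤ F(h_k) + (1/(4s))‖h_k - h_{k-1}‖². -/

import Mathlib

/-!
Since `h_{k+1}` minimizes `G`, comparing with the competitor `z = h_k` gives `G(h_{k+1}) ≤ G(h_k)`.
The negative term `-(1/(4s))‖h_{k+1} - h_{k-1}‖²` of `G(h_{k+1})` is controlled by
`‖h_{k+1} - h_{k-1}‖² ≤ 2‖h_{k+1} - h_k‖² + 2‖h_k - h_{k-1}‖²`, and what is left of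
`(1/s)‖h_{k+1} - h_k‖²` after this absorption still dominates `(1/(4s))‖h_{k+1} - h_k‖²`.
-/

section BDF2

variable {E : Type*} [SeminormedAddCommGroup E]

lemma norm_sub_sq_le_two_mul (x y z : E) :
    ‖x - z‖ ^ 2 ≤ 2 * (‖x - y‖ ^ 2 + ‖y - z‖ ^ 2) :=
  (pow_le_pow_left₀ (norm_nonneg _) (norm_sub_le_norm_sub_add_norm_sub x y z) 2).trans add_sq_le

/-- The paper's `G`, with `(prev, cur) = (h_{k-1}, h_k)`. -/
noncomputable def bdf2Objective (F : E → ℝ) (s : ℝ) (prev cur z : E) : ℝ :=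
  (1 / s) * ‖z - cur‖ ^ 2 - (1 / (4 * s)) * ‖z - prev‖ ^ 2 + F z

noncomputable def bdf2Energy (F : E → ℝ) (s : ℝ) (prev cur : E) : ℝ :=
  F cur + (1 / (4 * s)) * ‖cur - prev‖ ^ 2

lemma bdf2Energy_le_of_objective_le (F : E → ℝ) {s : ℝ} (hs : 0 ≤ s) {prev cur next : E}
    (h : bdf2Objective F s prev cur next ≤ bdf2Objective F s prev cur cur) :
    bdf2Energy F s cur next ≤ bdf2Energy F s prev cur := by
  unfold bdf2Objective at h
  unfold bdf2Energy
  set c := 1 / (4 * s)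
  have hc : 0 ≤ c := by positivity
  have h_inv : 1 / s = 4 * c := by simp only [c]; ring
  have h_split := mul_le_mul_of_nonneg_left (norm_sub_sq_le_two_mul next cur prev) hc
  rw [h_inv, sub_self, norm_zero] at h
  linarith [mul_nonneg hc (sq_nonneg ‖next - cur‖)]

end BDF2

theorem stmt_11_general (d : ℕ) (F : EuclideanSpace ℝ (Fin d) → ℝ)
    (s : ℝ) (hs : 0 < s) (hkm1 hk hk1 : EuclideanSpace ℝ (Fin d))
    (hmin : ∀ z : EuclideanSpace ℝ (Fin d),
      (1 / s) * ‖hk1 - hk‖ ^ 2 - (1 / (4 * s)) * ‖hk1 - hkm1‖ ^ 2 + F hk1 ≤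
      (1 / s) * ‖z - hk‖ ^ 2 - (1 / (4 * s)) * ‖z - hkm1‖ ^ 2 + F z) :
    F hk1 + (1 / (4 * s)) * ‖hk1 - hk‖ ^ 2 ≤ F hk + (1 / (4 * s)) * ‖hk - hkm1‖ ^ 2 :=
  bdf2Energy_le_of_objective_le F hs.le (hmin hk)

/-- Energy stability of the proximal BDF2 scheme: the modified energy
`F(h_k) + (1/(4s))‖h_k - h_{k-1}‖²` is non-increasing. -/
theorem stmt_11 (d : ℕ) (F : EuclideanSpace ℝ (Fin d) → ℝ) (hF : Differentiable ℝ F)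
    (s : ℝ) (hs : 0 < s) (hkm1 hk hk1 : EuclideanSpace ℝ (Fin d))
    (hmin : ∀ z : EuclideanSpace ℝ (Fin d),
      (1 / s) * ‖hk1 - hk‖ ^ 2 - (1 / (4 * s)) * ‖hk1 - hkm1‖ ^ 2 + F hk1 ≤
      (1 / s) * ‖z - hk‖ ^ 2 - (1 / (4 * s)) * ‖z - hkm1‖ ^ 2 + F z) :
    F hk1 + (1 / (4 * s)) * ‖hk1 - hk‖ ^ 2 ≤ F hk + (1 / (4 * s)) * ‖hk - hkm1‖ ^ 2 :=
  stmt_11_general d F s hs hkm1 hk hk1 hmin
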